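/- arXiv:1304.2971 — 2 statements merged into one kernel-verified Lean document; each statement's English description precedes it below -/
import Mathlib

section
/- For any real ν ≥ 1 and any natural number r ≥ 2, there exists a constant B > 0 depending only on r (and ν) such that for every multi-index α ∈ ℕ³, the sum over all componentwise decompositions α = α₁ + α₂ of C_α^{α₁} · ((α₁−r)!)^ν · ((α₂−r)!)^ν / ((α−r)!)^ν is at most B. -/
/-!
The summand factors over the three coordinates, so the sum is a product of three
one-dimensional sums `S(n) = ∑ₖ C(n,k) ((k-r)! (n-k-r)! / (n-r)!)^ν`. The ratio inside is at
most `1`, so `ν` may be replaced by `1`. For `2k ≤ n` the `k`-th term is `O_r(1/((k+1)(k+2)))`: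
for `k < r` because `C(n,k) ≤ n^(k) ≤ (r+1)^k (n-r)^(k)` (falling factorials), and for `k ≥ r`
because the term equals `n^(r) / (k^(r) (n-k)^(r)) ≤ (r+1)^r / k^(r)` with `k^(r) ≥ k(k-1)` as
`r ≥ 2`. The symmetry `k ↔ n - k` and a telescoping sum then bound `S(n)` independently of `n`.
-/

open Nat Finset

theorem Nat.factorial_sub_mul_factorial_sub_le (r : ℕ) {n k : ℕ} (hk : k ≤ n) :
    (k - r)! * (n - k - r)! ≤ (n - r)! := by
  rcases le_total r k with hrk | hkr
  · calc (k - r)! * (n - k - r)! ≤ (k - r + (n - k - r))! :=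
          Nat.le_of_dvd (factorial_pos _) (factorial_mul_factorial_dvd_factorial_add _ _)
      _ ≤ (n - r)! := factorial_le (by omega)
  · rw [Nat.sub_eq_zero_of_le hkr, factorial_zero, one_mul]
    exact factorial_le (by omega)

theorem Nat.descFactorial_le_pow_mul_descFactorial {n m c : ℕ} :
    ∀ {k : ℕ}, (∀ i < k, n - i ≤ c * (m - i)) → n.descFactorial k ≤ c ^ k * m.descFactorial k
  | 0, _ => by simp
  | k + 1, h => by
    rw [descFactorial_succ, descFactorial_succ, pow_succ]
    calc (n - k) * n.descFactorial k ≤ c * (m - k) * (c ^ k * m.descFactorial k) :=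
          Nat.mul_le_mul (h k k.lt_succ_self)
            (descFactorial_le_pow_mul_descFactorial fun i hi => h i (by omega))
      _ = c ^ k * c * ((m - k) * m.descFactorial k) := by ring

theorem Nat.descFactorial_le_descFactorial_of_le {n k m : ℕ} (hkm : k ≤ m) (hmn : m ≤ n) :
    n.descFactorial k ≤ n.descFactorial m := by
  rw [← descFactorial_mul_descFactorial hkm]
  exact Nat.le_mul_of_pos_left _ (descFactorial_pos.2 (by omega))

theorem Nat.succ_mul_succ_succ_le_descFactorial {k r : ℕ} (hr : 2 ≤ r) (hrk : r ≤ k) :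
    (k + 1) * (k + 2) ≤ 6 * k.descFactorial r := by
  obtain ⟨j, rfl⟩ : ∃ j, k = j + 2 := ⟨k - 2, by omega⟩
  have h2 : (j + 2).descFactorial 2 = (j + 2) * (j + 1) := by
    simp [descFactorial_succ, mul_comm]
  calc (j + 2 + 1) * (j + 2 + 2) ≤ 6 * ((j + 2) * (j + 1)) := by nlinarith
    _ ≤ 6 * (j + 2).descFactorial r := by
      rw [← h2]; exact Nat.mul_le_mul_left 6 (descFactorial_le_descFactorial_of_le hr hrk)

theorem Nat.descFactorial_mul_le_of_le {r n k : ℕ} (hr : 2 ≤ r) (hrk : r ≤ k) (hkn : 2 * k ≤ n) :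
    n.descFactorial r * ((k + 1) * (k + 2)) ≤
      6 * (r + 1) ^ r * (k.descFactorial r * (n - k).descFactorial r) := by
  have hdesc : n.descFactorial r ≤ (r + 1) ^ r * (n - k).descFactorial r :=
    descFactorial_le_pow_mul_descFactorial fun i hi => by
      obtain ⟨t, rfl⟩ : ∃ t, k = r + t := ⟨k - r, by omega⟩
      obtain ⟨m, rfl⟩ : ∃ m, n = m + r + t + i := ⟨n - r - t - i, by omega⟩
      have hm : r * (t + 1) ≤ r * m := Nat.mul_le_mul_left r (by omega)
      rw [show m + r + t + i - (r + t) - i = m by omega, Nat.add_sub_cancel]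
      nlinarith
  calc n.descFactorial r * ((k + 1) * (k + 2))
      ≤ (r + 1) ^ r * (n - k).descFactorial r * (6 * k.descFactorial r) :=
        Nat.mul_le_mul hdesc (succ_mul_succ_succ_le_descFactorial hr hrk)
    _ = 6 * (r + 1) ^ r * (k.descFactorial r * (n - k).descFactorial r) := by ring
theorem Nat.choose_mul_factorial_sub_le_of_lt {r n k : ℕ} (hkr : k < r) :
    n.choose k * (n - k - r)! ≤ 4 ^ r * (r + 1) ^ r * (n - r)! := by
  rcases lt_or_ge n (k + r) with hn | hn
  · rw [Nat.sub_eq_zero_of_le (by omega : n - k ≤ r), factorial_zero, mul_one]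
    calc n.choose k ≤ 4 ^ r * 1 * 1 := by
          rw [mul_one, mul_one, show 4 ^ r = 2 ^ (2 * r) by rw [pow_mul]; norm_num]
          exact (choose_le_two_pow n k).trans (Nat.pow_le_pow_right two_pos (by omega))
      _ ≤ 4 ^ r * (r + 1) ^ r * (n - r)! := by
          gcongr
          · exact Nat.one_le_pow _ _ r.succ_pos
          · exact (n - r).factorial_pos
  · have hdesc : n.descFactorial k ≤ (r + 1) ^ k * (n - r).descFactorial k :=
      descFactorial_le_pow_mul_descFactorial fun i hi => by
        have : r * 1 ≤ r * (n - r - i) := Nat.mul_le_mul_left r (by omega)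
        rw [add_mul, one_mul]
        omega
    calc n.choose k * (n - k - r)! ≤ (r + 1) ^ k * (n - r).descFactorial k * (n - r - k)! := by
          rw [show n - k - r = n - r - k by omega]
          exact Nat.mul_le_mul_right _ ((choose_le_descFactorial n k).trans hdesc)
      _ = (r + 1) ^ k * (n - r)! := by
          rw [mul_assoc, mul_comm _ (n - r - k)!, factorial_mul_descFactorial (by omega)]
      _ ≤ 4 ^ r * (r + 1) ^ r * (n - r)! := by
          refine Nat.mul_le_mul_right _ (le_trans ?_ (Nat.le_mul_of_pos_left _ (by positivity)))
          exact Nat.pow_le_pow_right r.succ_pos hkr.le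

theorem Nat.choose_mul_factorial_sub_le_of_le {r n k : ℕ} (hr : 2 ≤ r) (hrk : r ≤ k)
    (hkn : 2 * k ≤ n) :
    n.choose k * ((k - r)! * (n - k - r)!) * ((k + 1) * (k + 2)) ≤ 6 * (r + 1) ^ r * (n - r)! := by
  have hD : 0 < k.descFactorial r * (n - k).descFactorial r :=
    Nat.mul_pos (descFactorial_pos.2 hrk) (descFactorial_pos.2 (by omega))
  refine Nat.le_of_mul_le_mul_right ?_ hD
  have hsplit : n.choose k * ((k - r)! * (n - k - r)!) * (k.descFactorial r * (n - k).descFactorial r)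
      = (n - r)! * n.descFactorial r := by
    calc _ = n.choose k * ((k - r)! * k.descFactorial r) *
          ((n - k - r)! * (n - k).descFactorial r) := by ring
      _ = n ! := by
        rw [factorial_mul_descFactorial hrk, factorial_mul_descFactorial (by omega),
          choose_mul_factorial_mul_factorial (by omega)]
      _ = (n - r)! * n.descFactorial r := (factorial_mul_descFactorial (by omega)).symm
  calc n.choose k * ((k - r)! * (n - k - r)!) * ((k + 1) * (k + 2)) *
        (k.descFactorial r * (n - k).descFactorial r)
      = (n - r)! * (n.descFactorial r * ((k + 1) * (k + 2))) := by
        rw [mul_right_comm, hsplit, mul_assoc]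
    _ ≤ (n - r)! * (6 * (r + 1) ^ r * (k.descFactorial r * (n - k).descFactorial r)) :=
        Nat.mul_le_mul_left _ (descFactorial_mul_le_of_le hr hrk hkn)
    _ = 6 * (r + 1) ^ r * (n - r)! * (k.descFactorial r * (n - k).descFactorial r) := by ring

def splitBound (r : ℕ) : ℕ := 4 ^ r * (r + 1) ^ (r + 2)

theorem Nat.choose_mul_factorial_sub_le {r n k : ℕ} (hr : 2 ≤ r) (hkn : 2 * k ≤ n) :
    n.choose k * ((k - r)! * (n - k - r)!) * ((k + 1) * (k + 2)) ≤ splitBound r * (n - r)! := by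
  rcases lt_or_ge k r with hkr | hrk
  · rw [Nat.sub_eq_zero_of_le hkr.le, factorial_zero, one_mul]
    calc n.choose k * (n - k - r)! * ((k + 1) * (k + 2))
        ≤ 4 ^ r * (r + 1) ^ r * (n - r)! * ((r + 1) * (r + 1)) :=
          Nat.mul_le_mul (choose_mul_factorial_sub_le_of_lt hkr) (Nat.mul_le_mul (by omega) (by omega))
      _ = splitBound r * (n - r)! := by rw [splitBound]; ring
  · refine (choose_mul_factorial_sub_le_of_le hr hrk hkn).trans (Nat.mul_le_mul_right _ ?_)
    have h16 : 6 ≤ 4 ^ r := le_trans (by norm_num) (Nat.pow_le_pow_right (by norm_num) hr)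
    calc 6 * (r + 1) ^ r ≤ 4 ^ r * ((r + 1) ^ r * (r + 1) ^ 2) :=
          Nat.mul_le_mul h16 (Nat.le_mul_of_pos_right _ (by positivity))
      _ = splitBound r := by rw [splitBound, pow_add]

noncomputable def telescopingWeight (k : ℕ) : ℝ := 1 / ((k + 1) * (k + 2))

theorem telescopingWeight_nonneg (k : ℕ) : 0 ≤ telescopingWeight k := by
  unfold telescopingWeight; positivity

theorem sum_range_telescopingWeight_le_one (N : ℕ) : ∑ k ∈ range N, telescopingWeight k ≤ 1 := by
  have htel : ∀ k : ℕ, telescopingWeight k = 1 / ((k : ℝ) + 1) - 1 / (((k + 1 : ℕ) : ℝ) + 1) := by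
    intro k
    rw [telescopingWeight]
    push_cast
    field_simp
    ring
  rw [sum_congr rfl fun k _ => htel k, sum_range_sub' (fun k : ℕ => 1 / ((k : ℝ) + 1))]
  norm_num
  positivity

theorem choose_mul_factorial_ratio_le_of_two_mul_le {r n k : ℕ} (hr : 2 ≤ r) (hkn : 2 * k ≤ n) :
    (n.choose k : ℝ) * ((k - r)! * (n - k - r)! / (n - r)!) ≤ splitBound r * telescopingWeight k := by
  have hnat := Nat.choose_mul_factorial_sub_le hr hkn
  rw [telescopingWeight, mul_one_div, ← mul_div_assoc, div_le_div_iff₀ (by positivity) (by positivity)]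
  exact_mod_cast hnat

theorem choose_mul_factorial_ratio_le {r n k : ℕ} (hr : 2 ≤ r) (hk : k ≤ n) :
    (n.choose k : ℝ) * ((k - r)! * (n - k - r)! / (n - r)!) ≤
      splitBound r * (telescopingWeight k + telescopingWeight (n - k)) := by
  have hK : (0 : ℝ) ≤ splitBound r := Nat.cast_nonneg _
  rcases le_total (2 * k) n with hkn | hkn
  · calc _ ≤ splitBound r * telescopingWeight k := choose_mul_factorial_ratio_le_of_two_mul_le hr hkn
      _ ≤ _ := by gcongr; linarith [telescopingWeight_nonneg (n - k)]
  · have hsymm := choose_mul_factorial_ratio_le_of_two_mul_le (r := r) hr (show 2 * (n - k) ≤ n by omega)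
    rw [choose_symm hk, Nat.sub_sub_self hk, mul_comm ((n - k - r)! : ℝ)] at hsymm
    calc _ ≤ splitBound r * telescopingWeight (n - k) := hsymm
      _ ≤ _ := by gcongr; linarith [telescopingWeight_nonneg k]

noncomputable def splitTerm (ν : ℝ) (r n k : ℕ) : ℝ :=
  n.choose k * (((k - r)! : ℝ) ^ ν * ((n - k - r)! : ℝ) ^ ν / ((n - r)! : ℝ) ^ ν)

theorem splitTerm_nonneg (ν : ℝ) (r n k : ℕ) : 0 ≤ splitTerm ν r n k := by
  unfold splitTerm; positivity

theorem splitTerm_le {ν : ℝ} (hν : 1 ≤ ν) {r n k : ℕ} (hr : 2 ≤ r) (hk : k ≤ n) :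
    splitTerm ν r n k ≤ splitBound r * (telescopingWeight k + telescopingWeight (n - k)) := by
  have hratio : ((k - r)! * (n - k - r)! / (n - r)! : ℝ) ≤ 1 := by
    rw [div_le_one (by positivity)]
    exact_mod_cast Nat.factorial_sub_mul_factorial_sub_le r hk
  refine le_trans ?_ (choose_mul_factorial_ratio_le hr hk)
  rw [splitTerm, ← Real.mul_rpow (by positivity) (by positivity),
    ← Real.div_rpow (by positivity) (by positivity)]
  gcongr
  exact Real.rpow_le_self_of_le_one (by positivity) hratio hν

theorem sum_splitTerm_le {ν : ℝ} (hν : 1 ≤ ν) {r : ℕ} (hr : 2 ≤ r) (n : ℕ) :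
    ∑ k ∈ Icc 0 n, splitTerm ν r n k ≤ 2 * splitBound r := by
  rw [← range_succ_eq_Icc_zero]
  calc ∑ k ∈ range (n + 1), splitTerm ν r n k
      ≤ ∑ k ∈ range (n + 1), splitBound r * (telescopingWeight k + telescopingWeight (n - k)) :=
        sum_le_sum fun k hk => splitTerm_le hν hr (by simpa [Nat.lt_succ_iff] using hk)
    _ = splitBound r * (∑ k ∈ range (n + 1), telescopingWeight k +
          ∑ k ∈ range (n + 1), telescopingWeight k) := by
        rw [← mul_sum, sum_add_distrib, ← sum_range_reflect _ (n + 1)]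
        simp
    _ ≤ splitBound r * (1 + 1) := by
        gcongr <;> exact sum_range_telescopingWeight_le_one _
    _ = 2 * splitBound r := by ring

theorem prod_splitTerm {ι : Type*} [Fintype ι] (ν : ℝ) (r : ℕ) (α α₁ : ι → ℕ) :
    ∏ j, splitTerm ν r (α j) (α₁ j) =
      ((∏ j, (α j).choose (α₁ j) : ℕ) : ℝ) *
        (((∏ j, (α₁ j - r)! : ℕ) : ℝ) ^ ν * ((∏ j, (α j - α₁ j - r)! : ℕ) : ℝ) ^ ν /
          ((∏ j, (α j - r)! : ℕ) : ℝ) ^ ν) := by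
  simp only [splitTerm, Nat.cast_prod]
  rw [← Real.finsetProd_rpow _ _ (fun _ _ => by positivity),
    ← Real.finsetProd_rpow _ _ (fun _ _ => by positivity),
    ← Real.finsetProd_rpow _ _ (fun _ _ => by positivity),
    ← prod_mul_distrib, ← prod_div_distrib, ← prod_mul_distrib]

theorem sum_Icc_prod_splitTerm_le {ι : Type*} [Fintype ι] [DecidableEq ι] {ν : ℝ} (hν : 1 ≤ ν)
    {r : ℕ} (hr : 2 ≤ r) (α : ι → ℕ) :
    ∑ α₁ ∈ Icc 0 α, ∏ j, splitTerm ν r (α j) (α₁ j) ≤ (2 * splitBound r) ^ Fintype.card ι := by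
  rw [Pi.Icc_eq, ← prod_univ_sum, ← Finset.card_univ, ← prod_const]
  exact prod_le_prod (fun j _ => sum_nonneg fun k _ => splitTerm_nonneg ν r (α j) k)
    fun j _ => sum_splitTerm_le hν hr (α j)

/-- Combinatorial lemma: for `ν ≥ 1` and `r ≥ 2` there is a constant `B > 0`
(depending only on `r` and `ν`) bounding, uniformly in the multi-index
`α ∈ ℕ³`, the sum over all componentwise decompositions `α = α₁ + α₂` of
`C_α^{α₁} · ((α₁−r)!)^ν · ((α₂−r)!)^ν / ((α−r)!)^ν`. -/
theorem stmt0 (ν : ℝ) (hν : 1 ≤ ν) (r : ℕ) (hr : 2 ≤ r) :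
    ∃ B : ℝ, 0 < B ∧ ∀ α : Fin 3 → ℕ,
      ∑ α₁ ∈ Finset.Icc (0 : Fin 3 → ℕ) α,
        ((∏ j, (α j).choose (α₁ j) : ℕ) : ℝ) *
          (((∏ j, Nat.factorial (α₁ j - r) : ℕ) : ℝ) ^ ν *
            ((∏ j, Nat.factorial (α j - α₁ j - r) : ℕ) : ℝ) ^ ν /
            ((∏ j, Nat.factorial (α j - r) : ℕ) : ℝ) ^ ν) ≤ B := by
  have hK : 0 < splitBound r := by unfold splitBound; positivity
  refine ⟨(2 * splitBound r) ^ Fintype.card (Fin 3), by positivity, fun α => ?_⟩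
  simpa only [prod_splitTerm] using sum_Icc_prod_splitTerm_le hν hr α
end

section
/- For all ν ≥ 1, all natural numbers r ≥ 2, and every natural number a, the sum over k = 0,…,a of binom(a,k) · ((k ∸ r)! · ((a−k) ∸ r)! / (a ∸ r)!)^ν is bounded by a constant B > 0 depending only on r (and ν), uniformly in a. -/
/-!
Since the factorial ratio is at most `1` and `ν ≥ 1`, its `ν`-th power may be replaced by the
ratio itself. With `f n = n ! / (n ∸ r)!`, which lies between `((n + 1) / (r + 1)) ^ r` and
`(n + 1) ^ r`, the `k`-th summand is `f a / (f k * f (a - k))`. For `2 * k ≤ a` this gives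
`f a ≤ (2 * (r + 1)) ^ r * f (a - k)`, and as `r ≥ 2`, `f k ≥ k ! / (k ∸ 2)! ≥ (k + 1) ^ 2 / 9`.
By the symmetry `k ↔ a - k`, the sum is therefore dominated by a constant times
`∑ 1 / (k + 1) ^ 2`.
-/

open Nat Finset

theorem succ_pow_mul_factorial_tsub_le (n r : ℕ) : (n + 1) ^ r * (n - r)! ≤ (r + 1) ^ r * n ! := by
  rcases lt_or_ge n r with hnr | hrn
  · rw [Nat.sub_eq_zero_of_le hnr.le, factorial_zero, mul_one]
    calc (n + 1) ^ r ≤ (r + 1) ^ r := by gcongr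
      _ ≤ (r + 1) ^ r * n ! := Nat.le_mul_of_pos_right _ n.factorial_pos
  · obtain ⟨m, rfl⟩ := Nat.exists_eq_add_of_le' hrn
    rw [Nat.add_sub_cancel]
    calc (m + r + 1) ^ r * m ! ≤ ((r + 1) * (m + 1)) ^ r * m ! := by gcongr; nlinarith
      _ = (r + 1) ^ r * (m ! * (m + 1) ^ r) := by rw [mul_pow]; ring
      _ ≤ (r + 1) ^ r * (m + r)! := by gcongr; exact factorial_mul_pow_le_factorial

theorem factorial_le_factorial_tsub_mul_succ_pow (n r : ℕ) : n ! ≤ (n - r)! * (n + 1) ^ r := by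
  rw [← factorial_mul_descFactorial (min_le_left n r), tsub_min]
  gcongr
  calc n.descFactorial (min n r) ≤ n ^ min n r := descFactorial_le_pow n _
    _ ≤ (n + 1) ^ min n r := Nat.pow_le_pow_left n.le_succ _
    _ ≤ (n + 1) ^ r := Nat.pow_le_pow_right n.succ_pos (min_le_right n r)

theorem factorial_mul_factorial_tsub_le {a k : ℕ} (r : ℕ) (hk : 2 * k ≤ a) :
    a ! * (a - k - r)! ≤ (2 * (r + 1)) ^ r * ((a - r)! * (a - k)!) :=
  calc a ! * (a - k - r)! ≤ (a - r)! * (a + 1) ^ r * (a - k - r)! := by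
        gcongr; exact factorial_le_factorial_tsub_mul_succ_pow a r
    _ ≤ (a - r)! * (2 * (a - k + 1)) ^ r * (a - k - r)! := by gcongr; omega
    _ = 2 ^ r * (a - r)! * ((a - k + 1) ^ r * (a - k - r)!) := by rw [mul_pow]; ring
    _ ≤ 2 ^ r * (a - r)! * ((r + 1) ^ r * (a - k)!) :=
        Nat.mul_le_mul_left _ (succ_pow_mul_factorial_tsub_le (a - k) r)
    _ = (2 * (r + 1)) ^ r * ((a - r)! * (a - k)!) := by rw [mul_pow]; ring

theorem succ_sq_mul_factorial_tsub_le {r : ℕ} (hr : 2 ≤ r) (k : ℕ) :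
    (k + 1) ^ 2 * (k - r)! ≤ 9 * k ! :=
  calc (k + 1) ^ 2 * (k - r)! ≤ (k + 1) ^ 2 * (k - 2)! := by gcongr
    _ ≤ 9 * k ! := succ_pow_mul_factorial_tsub_le k 2

theorem succ_sq_mul_choose_mul_factorial_tsub_le {r a k : ℕ} (hr : 2 ≤ r) (hk : 2 * k ≤ a) :
    (k + 1) ^ 2 * (a.choose k * ((k - r)! * (a - k - r)!)) ≤
      9 * (2 * (r + 1)) ^ r * (a - r)! := by
  have hka : k ≤ a := by omega
  refine Nat.le_of_mul_le_mul_right ?_ (mul_pos k.factorial_pos (a - k).factorial_pos)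
  calc (k + 1) ^ 2 * (a.choose k * ((k - r)! * (a - k - r)!)) * (k ! * (a - k)!)
      = ((k + 1) ^ 2 * (k - r)!) * (a.choose k * k ! * (a - k)! * (a - k - r)!) := by ring
    _ = ((k + 1) ^ 2 * (k - r)!) * (a ! * (a - k - r)!) := by
        rw [choose_mul_factorial_mul_factorial hka]
    _ ≤ (9 * k !) * ((2 * (r + 1)) ^ r * ((a - r)! * (a - k)!)) :=
        Nat.mul_le_mul (succ_sq_mul_factorial_tsub_le hr k) (factorial_mul_factorial_tsub_le r hk)
    _ = 9 * (2 * (r + 1)) ^ r * (a - r)! * (k ! * (a - k)!) := by ring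

theorem factorial_tsub_mul_factorial_tsub_le {a k : ℕ} (r : ℕ) (hk : k ≤ a) :
    (k - r)! * (a - k - r)! ≤ (a - r)! :=
  (Nat.le_of_dvd (factorial_pos _) (factorial_mul_factorial_dvd_factorial_add _ _)).trans
    (factorial_le (by omega))

theorem choose_mul_factorial_ratio_rpow_le {ν : ℝ} (hν : 1 ≤ ν) {r a k : ℕ} (hr : 2 ≤ r)
    (hk : 2 * k ≤ a) :
    (a.choose k : ℝ) * ((((k - r)! * (a - k - r)! : ℕ) : ℝ) / ((a - r)! : ℕ)) ^ ν ≤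
      ((9 * (2 * (r + 1)) ^ r : ℕ) : ℝ) * ((k + 1 : ℝ) ^ 2)⁻¹ := by
  have hden : (0 : ℝ) < ((a - r)! : ℕ) := by exact_mod_cast factorial_pos _
  have hratio : (((k - r)! * (a - k - r)! : ℕ) : ℝ) / ((a - r)! : ℕ) ≤ 1 := by
    rw [div_le_one hden]
    exact_mod_cast factorial_tsub_mul_factorial_tsub_le r (by omega : k ≤ a)
  have hnat := succ_sq_mul_choose_mul_factorial_tsub_le hr hk
  calc (a.choose k : ℝ) * ((((k - r)! * (a - k - r)! : ℕ) : ℝ) / ((a - r)! : ℕ)) ^ ν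
      ≤ (a.choose k : ℝ) * ((((k - r)! * (a - k - r)! : ℕ) : ℝ) / ((a - r)! : ℕ)) := by
        gcongr
        exact Real.rpow_le_self_of_le_one (by positivity) hratio hν
    _ = (((k + 1) ^ 2 * (a.choose k * ((k - r)! * (a - k - r)!)) : ℕ) : ℝ) /
          (((a - r)! : ℕ) * (k + 1 : ℝ) ^ 2) := by
        push_cast
        field_simp
    _ ≤ ((9 * (2 * (r + 1)) ^ r * (a - r)! : ℕ) : ℝ) / (((a - r)! : ℕ) * (k + 1 : ℝ) ^ 2) :=
        div_le_div_of_nonneg_right (by exact_mod_cast hnat) (by positivity)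
    _ = ((9 * (2 * (r + 1)) ^ r : ℕ) : ℝ) * ((k + 1 : ℝ) ^ 2)⁻¹ := by
        push_cast
        field_simp

theorem sum_range_inv_succ_sq_le (n : ℕ) : ∑ k ∈ range n, ((k + 1 : ℝ) ^ 2)⁻¹ ≤ 2 := by
  have h := sum_Ioo_inv_sq_le (α := ℝ) 0 (n + 1)
  rw [← Finset.Ico_add_one_left_eq_Ioo, ← Finset.sum_Ico_add' (c := 1), ← range_eq_Ico] at h
  simpa using h

theorem sum_range_le_of_le_inv_succ_sq {f : ℕ → ℝ} {a : ℕ} {C : ℝ} (hC : 0 ≤ C)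
    (hsymm : ∀ k ≤ a, f (a - k) = f k) (hle : ∀ k, 2 * k ≤ a → f k ≤ C * ((k + 1 : ℝ) ^ 2)⁻¹) :
    ∑ k ∈ range (a + 1), f k ≤ 4 * C := by
  set g : ℕ → ℝ := fun k ↦ C * ((k + 1 : ℝ) ^ 2)⁻¹
  have hg : ∀ k, 0 ≤ g k := fun k ↦ by positivity
  have hf : ∀ k ∈ range (a + 1), f k ≤ g k + g (a - k) := by
    intro k hk
    rcases le_total (2 * k) a with hlow | hhigh
    · exact (hle k hlow).trans (le_add_of_nonneg_right (hg _))
    · rw [← hsymm k (Nat.lt_succ_iff.mp (mem_range.mp hk))]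
      exact (hle _ (by omega)).trans (le_add_of_nonneg_left (hg _))
  calc ∑ k ∈ range (a + 1), f k ≤ ∑ k ∈ range (a + 1), (g k + g (a - k)) := sum_le_sum hf
    _ = 2 * (C * ∑ k ∈ range (a + 1), ((k + 1 : ℝ) ^ 2)⁻¹) := by
        have hreflect : ∑ k ∈ range (a + 1), g (a - k) = ∑ k ∈ range (a + 1), g k := by
          simpa using sum_range_reflect g (a + 1)
        rw [sum_add_distrib, hreflect, ← mul_sum]
        ring
    _ ≤ 2 * (C * 2) := by gcongr; exact sum_range_inv_succ_sq_le _
    _ = 4 * C := by ring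

/-- One-dimensional combinatorial lemma: for `ν ≥ 1` and `r ≥ 2` there is a
constant `B > 0` (depending only on `r` and `ν`) such that for every `a ∈ ℕ`,
`∑_{k=0}^{a} binom(a,k) · ((k∸r)! · ((a−k)∸r)! / (a∸r)!)^ν ≤ B`. -/
theorem stmt3 (ν : ℝ) (hν : 1 ≤ ν) (r : ℕ) (hr : 2 ≤ r) :
    ∃ B : ℝ, 0 < B ∧ ∀ a : ℕ,
      ∑ k ∈ Finset.range (a + 1),
        (a.choose k : ℝ) *
          ((((k - r).factorial * ((a - k) - r).factorial : ℕ) : ℝ) /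
            (((a - r).factorial : ℕ) : ℝ)) ^ ν ≤ B := by
  refine ⟨4 * ((9 * (2 * (r + 1)) ^ r : ℕ) : ℝ), by positivity, fun a ↦ ?_⟩
  refine sum_range_le_of_le_inv_succ_sq (by positivity) (fun k hk ↦ ?_)
    (fun k hk ↦ choose_mul_factorial_ratio_rpow_le hν hr hk)
  rw [choose_symm hk, Nat.sub_sub_self hk, mul_comm (k - r)!]
end
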